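/- If for each layer the linear interpreter satisfies the freezing condition A_k(x)x + c_k(x) = h_k(x) for every x, then the composed linear interpreter agrees with the network at the reference input: F(x_0)·x_0 + r(x_0) = f(x_0), where f = L_n ∘ h_{n-1} ∘ L_{n-1} ∘ ⋯ ∘ h_1 ∘ L_1 and F, r are as in the sequential-network theorem with A_k = A_k(intermediate activation), c_k = c_k(intermediate activation). -/

import Mathlib

/-! With the masks frozen at the forward-pass activations of `x₀`, every layer acts on its own
input as the affine map `x ↦ Ŵ_k x + b̂_k`, so `z_k = Ŵ_k z_{k-1} + b̂_k`. Unrolling this affine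
recurrence from `z_0 = x₀` gives `z_n = (Ŵ_n ⋯ Ŵ_1) x₀ + Σ_i (Ŵ_n ⋯ Ŵ_{i+1}) b̂_i`. -/

open Matrix Finset

/-- `revProd What n j = Ŵ_n * ⋯ * Ŵ_{n-j+1}`. -/
def revProd {d : ℕ} (What : ℕ → Matrix (Fin d) (Fin d) ℝ) (n : ℕ) : ℕ → Matrix (Fin d) (Fin d) ℝ
  | 0 => 1
  | j + 1 => revProd What n j * What (n - j)

/-- `Qmat What n i = Ŵ_n * ⋯ * Ŵ_{i+1}`, so `Qmat What n n = 1` and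
`Qmat What n 0 = Ŵ_n ⋯ Ŵ_1 = F`. -/
def Qmat {d : ℕ} (What : ℕ → Matrix (Fin d) (Fin d) ℝ) (n i : ℕ) : Matrix (Fin d) (Fin d) ℝ :=
  revProd What n (n - i)

section Qmat

variable {d : ℕ} (What : ℕ → Matrix (Fin d) (Fin d) ℝ)

theorem revProd_succ_succ (n j : ℕ) :
    revProd What (n + 1) (j + 1) = What (n + 1) * revProd What n j := by
  induction j with
  | zero => simp [revProd]
  | succ j ih =>
    rw [revProd, ih, Nat.succ_sub_succ, mul_assoc]
    rfl

@[simp]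
theorem Qmat_self (n : ℕ) : Qmat What n n = 1 := by
  simp [Qmat, revProd]

theorem Qmat_succ_of_le {n i : ℕ} (hi : i ≤ n) :
    Qmat What (n + 1) i = What (n + 1) * Qmat What n i := by
  rw [Qmat, Nat.succ_sub hi, revProd_succ_succ, Qmat]

theorem Qmat_mulVec_add_sum_eq_of_affine_recurrence (bh z : ℕ → Fin d → ℝ) (n : ℕ)
    (hz : ∀ k, 1 ≤ k → k ≤ n → z k = What k *ᵥ z (k - 1) + bh k) :
    Qmat What n 0 *ᵥ z 0 + ∑ i ∈ Icc 1 n, Qmat What n i *ᵥ bh i = z n := by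
  induction n with
  | zero => simp
  | succ n ih =>
    have hsum : ∑ i ∈ Icc 1 n, Qmat What (n + 1) i *ᵥ bh i
        = What (n + 1) *ᵥ ∑ i ∈ Icc 1 n, Qmat What n i *ᵥ bh i := by
      rw [mulVec_sum]
      refine sum_congr rfl fun i hi => ?_
      rw [Qmat_succ_of_le What (mem_Icc.mp hi).2, mulVec_mulVec]
    calc Qmat What (n + 1) 0 *ᵥ z 0 + ∑ i ∈ Icc 1 (n + 1), Qmat What (n + 1) i *ᵥ bh i
        = What (n + 1) *ᵥ (Qmat What n 0 *ᵥ z 0 + ∑ i ∈ Icc 1 n, Qmat What n i *ᵥ bh i)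
            + bh (n + 1) := by
          rw [sum_Icc_succ_top (Nat.le_add_left 1 n), Qmat_self, one_mulVec, hsum,
            Qmat_succ_of_le What (Nat.zero_le n), ← mulVec_mulVec, mulVec_add, add_assoc]
      _ = z (n + 1) := by
          rw [ih fun k h1 h2 => hz k h1 (h2.trans n.le_succ),
            hz (n + 1) (Nat.le_add_left 1 n) le_rfl, Nat.add_sub_cancel]

end Qmat

/-- If each layer's linear interpreter satisfies the freezing condition
`A_k(x) x + c_k(x) = h_k(x)` for every `x`, then the composed linear interpreter,
with masks evaluated at the forward-pass intermediate activations of `x₀`, agrees with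
the network at the reference input: `F(x₀) x₀ + r(x₀) = f(x₀)`. -/
theorem composed_interpreter_agrees (d n : ℕ)
    (W : ℕ → Matrix (Fin d) (Fin d) ℝ) (b : ℕ → Fin d → ℝ)
    (h : ℕ → (Fin d → ℝ) → (Fin d → ℝ))
    (A : ℕ → (Fin d → ℝ) → Matrix (Fin d) (Fin d) ℝ)
    (c : ℕ → (Fin d → ℝ) → (Fin d → ℝ))
    (hfreeze : ∀ k x, (A k x) *ᵥ x + c k x = h k x)
    (x₀ : Fin d → ℝ) (z : ℕ → Fin d → ℝ)
    (hz0 : z 0 = x₀)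
    (hz : ∀ k, 1 ≤ k → k ≤ n → z k = h k ((W k) *ᵥ z (k - 1) + b k)) :
    (Qmat (fun k => A k ((W k) *ᵥ z (k - 1) + b k) * W k) n 0) *ᵥ x₀ +
      ∑ i ∈ Finset.Icc 1 n,
        (Qmat (fun k => A k ((W k) *ᵥ z (k - 1) + b k) * W k) n i) *ᵥ
          ((A i ((W i) *ᵥ z (i - 1) + b i)) *ᵥ b i + c i ((W i) *ᵥ z (i - 1) + b i))
      = z n := by
  subst hz0
  refine Qmat_mulVec_add_sum_eq_of_affine_recurrence _ _ z n fun k hk1 hkn => ?_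
  rw [hz k hk1 hkn, ← hfreeze, mulVec_add, ← mulVec_mulVec, add_assoc]
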